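/- Let E ⊆ [0,T] be a measurable set of positive Lebesgue measure and let ℓ ∈ (0,T) be a Lebesgue density point of E. Then for each a > 1 there exists ℓ₁ ∈ (ℓ, T) such that the sequence ℓ_{k+1} = ℓ + (ℓ₁ - ℓ)/a^k satisfies m(E ∩ (ℓ_{k+1}, ℓ_k)) ≥ (ℓ_k - ℓ_{k+1})/3 for all k ≥ 1. -/

import Mathlib

/-!
Choose `θ < 1` so close to `1` that the density ratio `m(E ∩ (ℓ-ρ, ℓ+ρ)) / 2ρ` exceeds `θ` for every
radius `ρ ≤ ℓ₁ - ℓ`. Removing `(ℓ-ρ, ℓ+ρ/a]` from the symmetric interval costs at most `ρ + ρ/a`,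
so `E` keeps measure `≥ 2θρ - ρ - ρ/a` in `(ℓ+ρ/a, ℓ+ρ)`; with `θ = 1 - (1 - 1/a)/3` this is a
third of the length `ρ - ρ/a`. The gaps of the geometric sequence are these intervals for
`ρ = (ℓ₁ - ℓ)/a^(k-1)`.
-/

open MeasureTheory Filter Set Topology

theorem volume_inter_Ioo_sub_ofReal_le (E : Set ℝ) (x y z : ℝ) :
    volume (E ∩ Ioo x z) - ENNReal.ofReal (y - x) ≤ volume (E ∩ Ioo y z) := by
  have hcover : E ∩ Ioo x z ⊆ (E ∩ Ioo y z) ∪ Ioc x y := by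
    rintro t ⟨htE, htx, htz⟩
    rcases lt_or_ge y t with hyt | hty
    · exact Or.inl ⟨htE, hyt, htz⟩
    · exact Or.inr ⟨htx, hty⟩
  rw [tsub_le_iff_right, ← Real.volume_Ioc]
  exact (measure_mono hcover).trans (measure_union_le _ _)

theorem ofReal_le_volume_inter_Ioo_div {E : Set ℝ} {ℓ ρ a : ℝ} (ha : 0 < a) (hρ : 0 ≤ ρ)
    (h : ENNReal.ofReal ((1 - (1 - a⁻¹) / 3) * (2 * ρ)) ≤ volume (E ∩ Ioo (ℓ - ρ) (ℓ + ρ))) :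
    ENNReal.ofReal ((ρ - ρ / a) / 3) ≤ volume (E ∩ Ioo (ℓ + ρ / a) (ℓ + ρ)) := by
  refine le_trans (le_of_eq ?_)
    ((tsub_le_tsub_right h _).trans (volume_inter_Ioo_sub_ofReal_le E _ (ℓ + ρ / a) _))
  rw [← ENNReal.ofReal_sub _ (by simp only [add_sub_sub_cancel]; positivity)]
  congr 1
  field_simp
  ring

theorem eventually_ofReal_mul_le_volume_inter_Ioo {E : Set ℝ} {ℓ : ℝ}
    (hdens : Tendsto
      (fun r : ℝ => volume (E ∩ Ioo (ℓ - r) (ℓ + r)) / ENNReal.ofReal (2 * r))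
      (𝓝[>] 0) (𝓝 1))
    {θ : ℝ} (hθ : θ < 1) :
    ∀ᶠ ρ in 𝓝[>] 0, ENNReal.ofReal (θ * (2 * ρ)) ≤ volume (E ∩ Ioo (ℓ - ρ) (ℓ + ρ)) := by
  have hθ' : ENNReal.ofReal θ < 1 := by
    rcases le_or_gt θ 0 with hθ0 | hθ0
    · simp [ENNReal.ofReal_of_nonpos hθ0]
    · exact ENNReal.ofReal_lt_one.mpr hθ
  filter_upwards [hdens.eventually (eventually_gt_nhds hθ'), self_mem_nhdsWithin]
    with ρ hρ (hρ0 : 0 < ρ)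
  rw [ENNReal.ofReal_mul' (by positivity)]
  exact ENNReal.mul_le_of_le_div hρ.le

theorem density_point_geometric_sequence_general (T ℓ : ℝ)
    (E : Set ℝ) (hℓ : ℓ ∈ Set.Ioo 0 T)
    (hdens : Tendsto
      (fun r : ℝ => volume (E ∩ Set.Ioo (ℓ - r) (ℓ + r)) / ENNReal.ofReal (2 * r))
      (nhdsWithin 0 (Set.Ioi 0)) (nhds 1))
    (a : ℝ) (ha : 1 < a) :
    ∃ ℓ₁ ∈ Set.Ioo ℓ T, ∀ k : ℕ, 1 ≤ k →
      volume (E ∩ Set.Ioo (ℓ + (ℓ₁ - ℓ) / a ^ (k : ℝ)) (ℓ + (ℓ₁ - ℓ) / a ^ ((k : ℝ) - 1))) ≥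
        ENNReal.ofReal
          (((ℓ + (ℓ₁ - ℓ) / a ^ ((k : ℝ) - 1)) - (ℓ + (ℓ₁ - ℓ) / a ^ (k : ℝ))) / 3) := by
  have ha0 : 0 < a := one_pos.trans ha
  have hθ : 1 - (1 - a⁻¹) / 3 < 1 := by
    have : a⁻¹ < 1 := inv_lt_one_of_one_lt₀ ha
    linarith
  have hgood := (eventually_ofReal_mul_le_volume_inter_Ioo hdens hθ).and
    (eventually_lt_nhds (sub_pos.mpr hℓ.2) |>.filter_mono nhdsWithin_le_nhds)
  obtain ⟨r, hr0, hr⟩ := mem_nhdsGT_iff_exists_Ioc_subset.mp hgood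
  have hrT : r < T - ℓ := (hr ⟨hr0, le_rfl⟩).2
  refine ⟨ℓ + r, ⟨by linarith [mem_Ioi.mp hr0], by linarith⟩, fun k hk => ?_⟩
  set ρ := r / a ^ ((k : ℝ) - 1)
  have hpow : 1 ≤ a ^ ((k : ℝ) - 1) :=
    Real.one_le_rpow ha.le (by simpa using (Nat.one_le_cast.mpr hk : (1 : ℝ) ≤ k))
  have hρ : ρ ∈ Ioc 0 r := ⟨div_pos hr0 (one_pos.trans_le hpow), div_le_self hr0.le hpow⟩
  have hnext : r / a ^ (k : ℝ) = ρ / a := by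
    rw [div_div, ← Real.rpow_add_one ha0.ne', sub_add_cancel]
  simp only [add_sub_cancel_left, hnext, add_sub_add_left_eq_sub]
  exact ofReal_le_volume_inter_Ioo_div ha0 hρ.1.le (hr hρ).1

/-- Phung–Wang decomposition of a measurable set near a density point:
the geometric sequence `ℓ_k = ℓ + (ℓ₁ - ℓ)/a^(k-1)` captures at least a third
of the measure in each gap. -/
theorem density_point_geometric_sequence (T ℓ : ℝ) (hT : 0 < T)
    (E : Set ℝ) (hE : MeasurableSet E) (hET : E ⊆ Set.Icc 0 T)
    (hpos : 0 < volume E) (hℓ : ℓ ∈ Set.Ioo 0 T)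
    (hdens : Tendsto
      (fun r : ℝ => volume (E ∩ Set.Ioo (ℓ - r) (ℓ + r)) / ENNReal.ofReal (2 * r))
      (nhdsWithin 0 (Set.Ioi 0)) (nhds 1))
    (a : ℝ) (ha : 1 < a) :
    ∃ ℓ₁ ∈ Set.Ioo ℓ T, ∀ k : ℕ, 1 ≤ k →
      volume (E ∩ Set.Ioo (ℓ + (ℓ₁ - ℓ) / a ^ (k : ℝ)) (ℓ + (ℓ₁ - ℓ) / a ^ ((k : ℝ) - 1))) ≥
        ENNReal.ofReal
          (((ℓ + (ℓ₁ - ℓ) / a ^ ((k : ℝ) - 1)) - (ℓ + (ℓ₁ - ℓ) / a ^ (k : ℝ))) / 3) :=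
  density_point_geometric_sequence_general T ℓ E hℓ hdens a ha
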